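/- arXiv:2307.09471 — 3 statements merged into one kernel-verified Lean document; each statement's English description precedes it below -/
import Mathlib

section
/- Let f(z) = 1 + (1/l) z^l + Σ_{k>l} f̂(k) z^k be a power series with real coefficients and positive radius of convergence, where l > 1. Suppose g(r) = r e^{i·θ̃(r)} where θ̃(r) = θ_j + O(r^{l_j′ − l}) as r → 0⁺, θ_j = 2πj/l, and l_j′ ≥ l_j > l. Then for any k ∈ L(f) with 0 < k < l_j one has e^{ik θ_j} = 1 and (g(r))^k = r^k + O(r^{l_j}) as r → 0⁺. -/
/-!
Writing `θ̃(r) = θ_j + δ(r)`, one has `g(r)^k - r^k = r^k (e^{ikθ_j} e^{ikδ(r)} - 1)`. For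
`k ∈ L(f)` below `l_j`, minimality of `l_j` gives `l ∣ jk`, so `e^{ikθ_j} = 1` and the difference
is `r^k (e^{ikδ(r)} - 1) = O(r^k δ(r)) = O(r^{k + l_j' - l})`; since `k ≥ l` and `l_j' ≥ l_j`,
this exponent is at least `l_j`.
-/

open Asymptotics Filter Topology Complex

theorem cexp_I_mul_two_pi_mul_div_eq_one {j k l : ℕ} (h : l ∣ j * k) :
    exp (I * k * (2 * Real.pi * j / l)) = 1 := by
  obtain ⟨m, hm⟩ := h
  rcases eq_or_ne l 0 with rfl | hl
  · simp
  have hlC : (l : ℂ) ≠ 0 := by exact_mod_cast hl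
  have hmC : (j : ℂ) * k = l * m := by exact_mod_cast hm
  rw [exp_eq_one_iff]
  refine ⟨m, ?_⟩
  field_simp
  linear_combination hmC

theorem Asymptotics.isBigO_pow_pow_nhds_zero_of_le {𝕜 : Type*} [NormedDivisionRing 𝕜]
    {m n : ℕ} (h : m ≤ n) : (fun x : 𝕜 => x ^ n) =O[𝓝 0] fun x => x ^ m := by
  rcases h.eq_or_lt with rfl | hlt
  · exact isBigO_refl _ _
  · exact (isLittleO_pow_pow hlt).isBigO

theorem Asymptotics.IsBigO.cexp_I_mul_sub_one {α : Type*} {F : Filter α} {f u : α → ℝ}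
    (h : f =O[F] u) : (fun x => exp (I * f x) - 1) =O[F] u :=
  (isBigO_of_le F fun _ => Real.norm_exp_I_mul_ofReal_sub_one_le).trans h

theorem ofReal_mul_cexp_pow_sub_pow_eq {k : ℕ} {φ : ℝ} (hφ : exp (I * k * φ) = 1) (r θ : ℝ) :
    ((r : ℂ) * exp (I * θ)) ^ k - (r : ℂ) ^ k =
      (r : ℂ) ^ k * (exp (I * ↑(k * (θ - φ))) - 1) := by
  have hsplit : I * ↑(k * (θ - φ)) = k * (I * θ) - I * k * φ := by push_cast; ring
  rw [hsplit, exp_sub, hφ, div_one, exp_nat_mul, mul_pow]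
  ring

theorem isBigO_ofReal_mul_cexp_pow_sub_pow {F : Filter ℝ} {θ u : ℝ → ℝ} {φ : ℝ} {k : ℕ}
    (hφ : exp (I * k * φ) = 1) (hθ : (fun r => θ r - φ) =O[F] u) :
    (fun r : ℝ => ((r : ℂ) * exp (I * θ r)) ^ k - (r : ℂ) ^ k) =O[F] fun r => r ^ k * u r := by
  simp_rw [ofReal_mul_cexp_pow_sub_pow_eq hφ]
  have hpow : (fun r : ℝ => (r : ℂ) ^ k) =O[F] fun r => r ^ k :=
    isBigO_of_le F fun r => by simp
  exact hpow.mul ((isBigO_const_mul_self (k : ℝ) _ F).trans hθ).cexp_I_mul_sub_one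

theorem g_pow_asymptotic_general (L : Set ℕ) (l lj lj' j : ℕ)
    (hlmin : ∀ k ∈ L, 0 < k → l ≤ k)
    (hljmin : ∀ k ∈ L, 0 < k → k < lj → l ∣ j * k)
    (hlj' : lj ≤ lj')
    (θtilde : ℝ → ℝ)
    (hθ : (fun r : ℝ => θtilde r - 2 * Real.pi * j / l)
            =O[nhdsWithin 0 (Set.Ioi 0)] (fun r : ℝ => r ^ (lj' - l)))
    (g : ℝ → ℂ) (hg : ∀ r : ℝ, g r = r * Complex.exp (Complex.I * θtilde r)) :
    ∀ k ∈ L, 0 < k → k < lj →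
      Complex.exp (Complex.I * k * (2 * Real.pi * j / l)) = 1 ∧
      (fun r : ℝ => g r ^ k - (r : ℂ) ^ k)
        =O[nhdsWithin 0 (Set.Ioi 0)] (fun r : ℝ => r ^ lj) := by
  intro k hkL hk hklj
  have hφ := cexp_I_mul_two_pi_mul_div_eq_one (hljmin k hkL hk hklj)
  refine ⟨hφ, ?_⟩
  replace hφ : exp (I * k * ↑(2 * Real.pi * j / l)) = 1 := by push_cast; exact hφ
  have hexp : lj ≤ k + (lj' - l) := by have := hlmin k hkL hk; omega
  simp_rw [hg]
  refine (isBigO_ofReal_mul_cexp_pow_sub_pow hφ hθ).trans ?_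
  simp_rw [← pow_add]
  exact (isBigO_pow_pow_nhds_zero_of_le hexp).mono nhdsWithin_le_nhds

/-- For `k ∈ L(f)` with `0 < k < l_j` one has `e^{ikθ_j} = 1` and
`(g(r))^k = r^k + O(r^{l_j})` as `r → 0⁺`, where `g(r) = r e^{iθ̃(r)}` and
`θ̃(r) = θ_j + O(r^{l_j' - l})`. -/
theorem g_pow_asymptotic (L : Set ℕ) (l lj lj' j : ℕ)
    (hl : 1 < l) (hlL : l ∈ L) (hlmin : ∀ k ∈ L, 0 < k → l ≤ k)
    (hj : 1 ≤ j) (hjm : j ≤ l / 2)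
    (hljL : lj ∈ L) (hljnd : ¬ (l ∣ j * lj))
    (hljmin : ∀ k ∈ L, 0 < k → k < lj → l ∣ j * k)
    (hlj : l < lj) (hlj' : lj ≤ lj')
    (θtilde : ℝ → ℝ)
    (hθ : (fun r : ℝ => θtilde r - 2 * Real.pi * j / l)
            =O[nhdsWithin 0 (Set.Ioi 0)] (fun r : ℝ => r ^ (lj' - l)))
    (g : ℝ → ℂ) (hg : ∀ r : ℝ, g r = r * Complex.exp (Complex.I * θtilde r)) :
    ∀ k ∈ L, 0 < k → k < lj →
      Complex.exp (Complex.I * k * (2 * Real.pi * j / l)) = 1 ∧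
      (fun r : ℝ => g r ^ k - (r : ℂ) ^ k)
        =O[nhdsWithin 0 (Set.Ioi 0)] (fun r : ℝ => r ^ lj) :=
  g_pow_asymptotic_general L l lj lj' j hlmin hljmin hlj' θtilde hθ g hg
end

section
/- Let p(r) be a real power series near 0 with μ_p(r) = r p′(r)/p(r) = r^l + r^{l+1} G(r) for some function G analytic at 0, where l ≥ 1. Then there exists a unique function r(t), analytic at t = 0 with r(0) = 0 and r′(0) = 1, such that μ_p(r(t)) = t^l for all small t > 0. -/
/-!
The function `1 + s G(s)` is analytic with value `1` at `0`, so it has an analytic positive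
`l`-th root `φ`, and `μ_p(s) = F(s)^l` near `0` with `F(s) = s φ(s)`, `F(0) = 0`, `F'(0) = 1`.
The analytic inverse function theorem gives `r = F⁻¹` near `0`, and `μ_p(r(t)) = F(r(t))^l = t^l`.
Conversely, any `r'` as in the statement is positive for small `t > 0`, so `F(r'(t)) > 0` has
`l`-th power `t^l`, whence `F(r'(t)) = t` and `r' = r` on some `(0, ε)`; the identity theorem
for analytic functions extends this to a neighbourhood of `0`.
-/

open Filter Topology

theorem exists_analyticAt_pos_pow_eq {g : ℝ → ℝ} {a : ℝ} (hg : AnalyticAt ℝ g a) (ha : 0 < g a)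
    {n : ℕ} (hn : n ≠ 0) :
    ∃ φ : ℝ → ℝ, AnalyticAt ℝ φ a ∧ (∀ s, 0 < φ s) ∧ ∀ᶠ s in 𝓝 a, φ s ^ n = g s := by
  have hn' : (n : ℝ) ≠ 0 := Nat.cast_ne_zero.mpr hn
  refine ⟨fun s => Real.exp (Real.log (g s) / n), ((hg.log ha).div analyticAt_const hn').rexp,
    fun s => Real.exp_pos _, ?_⟩
  filter_upwards [hg.continuousAt.eventually (eventually_gt_nhds ha)] with s hs
  rw [← Real.exp_nat_mul, mul_div_cancel₀ _ hn', Real.exp_log hs]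

theorem exists_analyticAt_pow_eq_pow_add_pow_succ_mul {G : ℝ → ℝ} (hG : AnalyticAt ℝ G 0)
    {l : ℕ} (hl : l ≠ 0) :
    ∃ F : ℝ → ℝ, AnalyticAt ℝ F 0 ∧ F 0 = 0 ∧ deriv F 0 = 1 ∧ (∀ s, 0 < s → 0 < F s) ∧
      ∀ᶠ s in 𝓝 0, F s ^ l = s ^ l + s ^ (l + 1) * G s := by
  obtain ⟨φ, hφ, hφpos, hφpow⟩ :=
    exists_analyticAt_pos_pow_eq (g := fun s => 1 + s * G s) (a := 0) (by fun_prop) (by simp) hl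
  have hφ0 : φ 0 = 1 :=
    (pow_eq_one_iff_of_nonneg (hφpos 0).le hl).mp (by simpa using hφpow.self_of_nhds)
  refine ⟨fun s => s * φ s, analyticAt_id.fun_mul hφ, zero_mul _, ?_,
    fun s hs => mul_pos hs (hφpos s), ?_⟩
  · simp [deriv_fun_mul differentiableAt_fun_id hφ.differentiableAt, hφ0]
  · filter_upwards [hφpow] with s hφs
    rw [mul_pow, hφs]
    ring

theorem AnalyticAt.exists_localInverse {𝕜 : Type*} [NontriviallyNormedField 𝕜] [CompleteSpace 𝕜]
    [CharZero 𝕜] {f : 𝕜 → 𝕜} {x : 𝕜} (hf : AnalyticAt 𝕜 f x) (hf' : deriv f x ≠ 0) :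
    ∃ g : 𝕜 → 𝕜, AnalyticAt 𝕜 g (f x) ∧ g (f x) = x ∧ deriv g (f x) = (deriv f x)⁻¹ ∧
      (∀ᶠ y in 𝓝 (f x), f (g y) = y) ∧ ∀ᶠ z in 𝓝 x, g (f z) = z :=
  ⟨_, hf.analyticAt_localInverse hf', HasStrictFDerivAt.localInverse_apply_image ..,
    (hf.hasStrictDerivAt.to_localInverse hf').hasDerivAt.deriv,
    HasStrictDerivAt.eventually_right_inverse .., HasStrictDerivAt.eventually_left_inverse ..⟩

theorem HasDerivAt.eventually_nhdsGT_lt {f : ℝ → ℝ} {f' a : ℝ} (hf : HasDerivAt f f' a)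
    (hf' : 0 < f') : ∀ᶠ t in 𝓝[>] a, f a < f t := by
  have hslope : ∀ᶠ t in 𝓝[>] a, 0 < slope f a t :=
    (hf.tendsto_slope.mono_left (nhdsGT_le_nhdsNE a)).eventually (eventually_gt_nhds hf')
  filter_upwards [hslope, self_mem_nhdsWithin] with t ht hat
  rw [slope_def_field] at ht
  exact sub_pos.mp (pos_of_mul_pos_left ht (inv_pos.mpr (sub_pos.mpr hat)).le)

theorem AnalyticAt.eventuallyEq_of_eventuallyEq_nhdsGT {E : Type*} [NormedAddCommGroup E]
    [NormedSpace ℝ E] {f g : ℝ → E} {a : ℝ} (hf : AnalyticAt ℝ f a) (hg : AnalyticAt ℝ g a)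
    (h : f =ᶠ[𝓝[>] a] g) : f =ᶠ[𝓝 a] g :=
  (hf.frequently_eq_iff_eventually_eq hg).mp (h.frequently.filter_mono (nhdsGT_le_nhdsNE a))

theorem inverse_mu_analytic_general (p G : ℝ → ℝ)
    (l : ℕ) (hl : 1 ≤ l) (hG : AnalyticAt ℝ G 0)
    (hμ : ∀ᶠ s in nhds (0 : ℝ), s * deriv p s / p s = s ^ l + s ^ (l + 1) * G s) :
    ∃ r : ℝ → ℝ,
      (AnalyticAt ℝ r 0 ∧ r 0 = 0 ∧ deriv r 0 = 1 ∧
        ∀ᶠ t in nhdsWithin 0 (Set.Ioi 0), r t * deriv p (r t) / p (r t) = t ^ l) ∧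
      ∀ r' : ℝ → ℝ,
        (AnalyticAt ℝ r' 0 ∧ r' 0 = 0 ∧ deriv r' 0 = 1 ∧
          ∀ᶠ t in nhdsWithin 0 (Set.Ioi 0), r' t * deriv p (r' t) / p (r' t) = t ^ l) →
        r' =ᶠ[nhds 0] r := by
  have hl0 : l ≠ 0 := by omega
  obtain ⟨F, hF, hF0, hF', hFpos, hFpow⟩ := exists_analyticAt_pow_eq_pow_add_pow_succ_mul hG hl0
  have hμF : ∀ᶠ s in 𝓝 0, s * deriv p s / p s = F s ^ l := by
    filter_upwards [hμ, hFpow] with s hs hFs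
    rw [hs, hFs]
  obtain ⟨r, hr, hr0, hr', hFr, hrF⟩ := hF.exists_localInverse (by simp [hF'])
  rw [hF0] at hr hr0 hr' hFr
  rw [hF', inv_one] at hr'
  have hr_lim : Tendsto r (𝓝 0) (𝓝 0) := by simpa only [hr0] using hr.continuousAt.tendsto
  have hμFr : ∀ᶠ t in 𝓝 0, r t * deriv p (r t) / p (r t) = t ^ l := by
    filter_upwards [hFr, hr_lim.eventually hμF] with t hFt hμt
    rw [hμt, hFt]
  refine ⟨r, ⟨hr, hr0, hr', nhdsWithin_le_nhds hμFr⟩, ?_⟩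
  rintro r' ⟨hr'an, hr'0, hr'', hμr'⟩
  refine hr'an.eventuallyEq_of_eventuallyEq_nhdsGT hr ?_
  have hr'_lim : Tendsto r' (𝓝 0) (𝓝 0) := by simpa only [hr'0] using hr'an.continuousAt.tendsto
  have hr'pos := (hr'' ▸ hr'an.differentiableAt.hasDerivAt).eventually_nhdsGT_lt one_pos
  filter_upwards [hμr', nhdsWithin_le_nhds (hr'_lim.eventually (hμF.and hrF)),
    hr'pos, self_mem_nhdsWithin] with t hμt ⟨hμFt, hrFt⟩ ht hpos
  have hFt : F (r' t) = t := by
    refine (pow_left_inj₀ (hFpos _ (hr'0 ▸ ht)).le hpos.le hl0).mp ?_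
    rw [← hμFt, hμt]
  rw [← hrFt, hFt]

/-- Existence and uniqueness (as germs at 0) of an analytic solution `r(t)` of
`μ_p(r(t)) = t^l` with `r(0) = 0`, `r'(0) = 1`. -/
theorem inverse_mu_analytic (p G : ℝ → ℝ) (hp : AnalyticAt ℝ p 0) (hp0 : p 0 = 1)
    (l : ℕ) (hl : 1 ≤ l) (hG : AnalyticAt ℝ G 0)
    (hμ : ∀ᶠ s in nhds (0 : ℝ), s * deriv p s / p s = s ^ l + s ^ (l + 1) * G s) :
    ∃ r : ℝ → ℝ,
      (AnalyticAt ℝ r 0 ∧ r 0 = 0 ∧ deriv r 0 = 1 ∧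
        ∀ᶠ t in nhdsWithin 0 (Set.Ioi 0), r t * deriv p (r t) / p (r t) = t ^ l) ∧
      ∀ r' : ℝ → ℝ,
        (AnalyticAt ℝ r' 0 ∧ r' 0 = 0 ∧ deriv r' 0 = 1 ∧
          ∀ᶠ t in nhdsWithin 0 (Set.Ioi 0), r' t * deriv p (r' t) / p (r' t) = t ^ l) →
        r' =ᶠ[nhds 0] r :=
  inverse_mu_analytic_general p G l hl hG hμ
end

section
/- For all real t ≥ 0 and all integers s, the quantity 1 + 2 e^{−t(5−√5)/4} cos(2πs/5 − t√((5+√5)/8)) + 2 e^{−t(5+√5)/4} cos(4πs/5 − t√((5−√5)/8)) is non-negative. -/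
/-!
Write `ζ = e^{2πi/n}`. Expanding the exponentials and filtering with the `n`-th roots of unity,
`∑_{k<n} exp(t ζ⁻ᵏ) ζ^{ks} = n ∑_{m ≡ s (mod n)} tᵐ / m!`, which is non-negative for `t ≥ 0`
(it is `n eᵗ` times the probability that a Poisson variable of mean `t` is `≡ s mod n`).
For `n = 5` the real parts of the summands `k` and `5 - k` coincide, and the values of `cos` and
`sin` at `2π/5` and `4π/5` turn the real part of the sum into `eᵗ` times the expression of the
theorem.
-/

open Real Finset Nat

theorem IsPrimitiveRoot.sum_zpow_mul_eq_ite {K : Type*} [Field K] {ζ : K} {n : ℕ}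
    (hζ : IsPrimitiveRoot ζ n) (m : ℤ) :
    ∑ k ∈ range n, ζ ^ ((k : ℤ) * m) = if (n : ℤ) ∣ m then (n : K) else 0 := by
  by_cases h : (n : ℤ) ∣ m
  · simp [h, (hζ.zpow_eq_one_iff_dvd _).2 (h.mul_left _)]
  · have hne : ζ ^ m ≠ 1 := mt (hζ.zpow_eq_one_iff_dvd m).1 h
    simp_rw [if_neg h, mul_comm _ m, zpow_mul, zpow_natCast]
    rw [geom_sum_eq hne, ← zpow_natCast, ← zpow_mul, mul_comm, zpow_mul, zpow_natCast,
      hζ.pow_eq_one, one_zpow, sub_self, zero_div]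

theorem Complex.hasSum_exp_mul_zpow {ζ : ℂ} (hζ : ζ ≠ 0) (t : ℂ) (k s : ℤ) :
    HasSum (fun m : ℕ => t ^ m / m ! * ζ ^ (k * (s - m)))
      (exp (t * ζ ^ (-k)) * ζ ^ (k * s)) := by
  rw [exp_eq_exp_ℂ]
  refine ((NormedSpace.expSeries_div_hasSum_exp (t * ζ ^ (-k))).mul_right (ζ ^ (k * s))).congr_fun
    fun m => ?_
  rw [mul_pow, ← zpow_natCast (ζ ^ (-k)), ← zpow_mul, mul_div_right_comm, mul_assoc,
    ← zpow_add₀ hζ]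
  congr 2
  ring

theorem IsPrimitiveRoot.re_sum_exp_mul_zpow_nonneg {ζ : ℂ} {n : ℕ} (hζ : IsPrimitiveRoot ζ n)
    {t : ℝ} (ht : 0 ≤ t) (s : ℤ) :
    0 ≤ (∑ k ∈ range n, Complex.exp (t * ζ ^ (-(k : ℤ))) * ζ ^ ((k : ℤ) * s)).re := by
  have hsum := hasSum_sum fun k hk =>
    Complex.hasSum_exp_mul_zpow (hζ.ne_zero (Nat.ne_zero_of_lt (mem_range.1 hk))) t k s
  simp_rw [← mul_sum, hζ.sum_zpow_mul_eq_ite] at hsum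
  refine (Complex.hasSum_re hsum).nonneg fun m => ?_
  split_ifs
  · norm_cast
    positivity
  · simp

theorem Complex.re_exp_mul_exp_mul_I (t θ ψ : ℝ) :
    (exp (t * exp (-θ * I)) * exp (ψ * I)).re =
      Real.exp (t * Real.cos θ) * Real.cos (ψ - t * Real.sin θ) := by
  rw [← exp_add, exp_re, ← ofReal_neg]
  simp only [add_re, add_im, re_ofReal_mul, im_ofReal_mul, exp_ofReal_mul_I_re,
    exp_ofReal_mul_I_im, mul_I_re, mul_I_im, ofReal_re, ofReal_im, Real.cos_neg, Real.sin_neg]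
  ring_nf

theorem Complex.exp_two_pi_mul_I_div_zpow (n : ℕ) (j : ℤ) :
    exp (2 * π * I / n) ^ j = exp ((2 * π * j / n : ℝ) * I) := by
  rw [← exp_int_mul]
  push_cast
  ring_nf

noncomputable def cyclicHeatMode (n : ℕ) (t : ℝ) (s k : ℤ) : ℝ :=
  Real.exp (t * cos (2 * π * k / n)) * cos (2 * π * k * s / n - t * sin (2 * π * k / n))

theorem re_exp_mul_zpow_eq_cyclicHeatMode (n : ℕ) (t : ℝ) (s k : ℤ) :
    (Complex.exp (t * Complex.exp (2 * π * Complex.I / n) ^ (-k)) *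
      Complex.exp (2 * π * Complex.I / n) ^ (k * s)).re = cyclicHeatMode n t s k := by
  rw [Complex.exp_two_pi_mul_I_div_zpow, Complex.exp_two_pi_mul_I_div_zpow, cyclicHeatMode,
    ← Complex.re_exp_mul_exp_mul_I]
  push_cast
  ring_nf

theorem sum_cyclicHeatMode_nonneg (n : ℕ) {t : ℝ} (ht : 0 ≤ t) (s : ℤ) :
    0 ≤ ∑ k ∈ range n, cyclicHeatMode n t s k := by
  rcases eq_or_ne n 0 with rfl | hn
  · simp
  simp_rw [← re_exp_mul_zpow_eq_cyclicHeatMode, ← Complex.re_sum]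
  exact (Complex.isPrimitiveRoot_exp n hn).re_sum_exp_mul_zpow_nonneg ht s

theorem cyclicHeatMode_neg (n : ℕ) (t : ℝ) (s k : ℤ) :
    cyclicHeatMode n t s (-k) = cyclicHeatMode n t s k := by
  simp only [cyclicHeatMode, Int.cast_neg, mul_neg, neg_mul, neg_div, cos_neg, sin_neg,
    neg_sub_neg]
  rw [← cos_neg (t * _ - _), neg_sub]

theorem cyclicHeatMode_add_self {n : ℕ} (hn : n ≠ 0) (t : ℝ) (s k : ℤ) :
    cyclicHeatMode n t s (k + n) = cyclicHeatMode n t s k := by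
  have hangle : 2 * π * ((k + n : ℤ) : ℝ) / n = 2 * π * k / n + 2 * π := by
    push_cast
    field_simp
  have hphase : 2 * π * ((k + n : ℤ) : ℝ) * s / n = 2 * π * k * s / n + s * (2 * π) := by
    push_cast
    field_simp
  rw [cyclicHeatMode, cyclicHeatMode, hangle, hphase, cos_add_two_pi, sin_add_two_pi,
    add_sub_right_comm, cos_add_int_mul_two_pi]

namespace Real

theorem cos_two_pi_div_five : cos (2 * π / 5) = (√5 - 1) / 4 := by
  rw [mul_div_assoc, cos_two_mul, cos_pi_div_five]
  nlinarith [sq_sqrt (show (0 : ℝ) ≤ 5 by norm_num)]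

theorem cos_four_pi_div_five : cos (4 * π / 5) = -(1 + √5) / 4 := by
  rw [show 4 * π / 5 = π - π / 5 by ring, cos_pi_sub, cos_pi_div_five, neg_div]

theorem sin_two_pi_div_five : sin (2 * π / 5) = √((5 + √5) / 8) := by
  rw [sin_eq_sqrt_one_sub_cos_sq (by positivity) (by linarith [pi_pos]), cos_two_pi_div_five]
  congr 1
  nlinarith [sq_sqrt (show (0 : ℝ) ≤ 5 by norm_num)]

theorem sin_four_pi_div_five : sin (4 * π / 5) = √((5 - √5) / 8) := by
  rw [sin_eq_sqrt_one_sub_cos_sq (by positivity) (by linarith [pi_pos]), cos_four_pi_div_five]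
  congr 1
  nlinarith [sq_sqrt (show (0 : ℝ) ≤ 5 by norm_num)]

end Real

theorem cyclicHeatMode_five_one (t : ℝ) (s : ℤ) :
    cyclicHeatMode 5 t s 1 =
      Real.exp (t * ((√5 - 1) / 4)) * cos (2 * π * s / 5 - t * √((5 + √5) / 8)) := by
  simp only [cyclicHeatMode, Int.cast_one, mul_one, Nat.cast_ofNat, cos_two_pi_div_five,
    sin_two_pi_div_five]

theorem cyclicHeatMode_five_two (t : ℝ) (s : ℤ) :
    cyclicHeatMode 5 t s 2 =
      Real.exp (t * (-(1 + √5) / 4)) * cos (4 * π * s / 5 - t * √((5 - √5) / 8)) := by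
  have h : 2 * π * ((2 : ℤ) : ℝ) = 4 * π := by push_cast; ring
  simp only [cyclicHeatMode, h, Nat.cast_ofNat, cos_four_pi_div_five, sin_four_pi_div_five]

theorem sum_range_five_cyclicHeatMode (t : ℝ) (s : ℤ) :
    ∑ k ∈ range 5, cyclicHeatMode 5 t s k =
      Real.exp t + 2 * cyclicHeatMode 5 t s 1 + 2 * cyclicHeatMode 5 t s 2 := by
  have h0 : cyclicHeatMode 5 t s 0 = Real.exp t := by simp [cyclicHeatMode]
  have h3 : cyclicHeatMode 5 t s 3 = cyclicHeatMode 5 t s 2 := by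
    rw [← cyclicHeatMode_neg, ← cyclicHeatMode_add_self (by norm_num)]
    norm_num
  have h4 : cyclicHeatMode 5 t s 4 = cyclicHeatMode 5 t s 1 := by
    rw [← cyclicHeatMode_neg, ← cyclicHeatMode_add_self (by norm_num)]
    norm_num
  simp only [sum_range_succ, sum_range_zero]
  push_cast
  rw [h0, h3, h4]
  ring

/-- Non-negativity of the trigonometric-exponential sum of Example 2. -/
theorem trig_exp_nonneg (t : ℝ) (ht : 0 ≤ t) (s : ℤ) :
    0 ≤ 1 +
        2 * Real.exp (-t * (5 - Real.sqrt 5) / 4) *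
          Real.cos (2 * Real.pi * s / 5 - t * Real.sqrt ((5 + Real.sqrt 5) / 8)) +
        2 * Real.exp (-t * (5 + Real.sqrt 5) / 4) *
          Real.cos (4 * Real.pi * s / 5 - t * Real.sqrt ((5 - Real.sqrt 5) / 8)) := by
  have h := sum_cyclicHeatMode_nonneg 5 ht s
  rw [sum_range_five_cyclicHeatMode, cyclicHeatMode_five_one, cyclicHeatMode_five_two] at h
  have hexp : Real.exp (-t) * Real.exp t = 1 := by
    rw [← Real.exp_add, neg_add_cancel, Real.exp_zero]
  rw [show -t * (5 - √5) / 4 = -t + t * ((√5 - 1) / 4) by ring,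
    show -t * (5 + √5) / 4 = -t + t * (-(1 + √5) / 4) by ring, Real.exp_add, Real.exp_add]
  linear_combination mul_nonneg (Real.exp_pos (-t)).le h + hexp
end
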